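/- Let K and L be nonzero positive semidefinite operators on a finite-dimensional complex Hilbert space and set M := K + L. Then Tr[K M^{-1/2} L M^{-1/2}] ≤ (1/2)(Tr[K + L] − Tr|K − L|), where |A| := √(A†A) and M^{-1/2} is the inverse square root of M on its support (Moore–Penrose convention). -/

import Mathlib

/-!
Write `M = K + L`, `D = K - L` and `S = M^{-1/2}`. Polarization and `MSMS = M` give
`4 Tr[KSLS] = Tr M - Tr[DSDS]`, so it suffices to show `2 Tr|D| ≤ Tr M + Tr[DSDS]`.
Let `U` be a Hermitian unitary with `Tr|D| = Tr[UD]`. As `ker M ⊆ ker D`, the matrix `D` is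
unchanged by sandwiching it between the support projections `M^{1/4} M^{-1/4}` and
`M^{-1/4} M^{1/4}`, so `Tr[UD] = Tr[AB]` with `A = M^{1/4} U M^{1/4}` and
`B = M^{-1/4} D M^{-1/4}`. Now `2 Re Tr[AB] ≤ Tr[A²] + Tr[B²]`, where `Tr[B²] = Tr[DSDS]` and
`Tr[A²] = Tr[(UM^{1/2})²] ≤ Tr[(UM^{1/2})ᴴ(UM^{1/2})] = Tr M`.
-/

open scoped BigOperators Kronecker ComplexOrder
open Matrix

noncomputable section

/-- Fractional power (functional calculus on the support, `0^t := 0` for `t ≠ 0`,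
which also implements the Moore–Penrose pseudo-inverse convention for negative
exponents) of a Hermitian matrix; junk value `0` for non-Hermitian matrices. -/
noncomputable def mrpow {m : Type*} [Fintype m] [DecidableEq m]
    (A : Matrix m m ℂ) (t : ℝ) : Matrix m m ℂ :=
  if hA : A.IsHermitian then
    (hA.eigenvectorUnitary : Matrix m m ℂ) *
      Matrix.diagonal (fun i => ((hA.eigenvalues i ^ t : ℝ) : ℂ)) *
      star (hA.eigenvectorUnitary : Matrix m m ℂ)
  else 0

/-- Matrix logarithm on the support (eigenvalue `0 ↦ 0`, since `Real.log 0 = 0`)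
of a Hermitian matrix; junk value `0` otherwise. -/
noncomputable def mlog {m : Type*} [Fintype m] [DecidableEq m]
    (A : Matrix m m ℂ) : Matrix m m ℂ :=
  if hA : A.IsHermitian then
    (hA.eigenvectorUnitary : Matrix m m ℂ) *
      Matrix.diagonal (fun i => ((Real.log (hA.eigenvalues i) : ℝ) : ℂ)) *
      star (hA.eigenvectorUnitary : Matrix m m ℂ)
  else 0

/-- Trace norm `‖A‖₁ = Tr √(AᴴA)`. -/
noncomputable def traceNorm {m : Type*} [Fintype m] [DecidableEq m]
    (A : Matrix m m ℂ) : ℝ :=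
  ((mrpow (Aᴴ * A) (1/2)).trace).re

namespace Matrix

section

variable {n : Type*} [Fintype n]

lemma mul_eq_zero_of_ker_le {M D N : Matrix n n ℂ} (hker : ∀ v, M *ᵥ v = 0 → D *ᵥ v = 0)
    (hMN : M * N = 0) : D * N = 0 := by
  refine ext_iff_mulVec.mpr fun v => ?_
  rw [← mulVec_mulVec, hker _ (by rw [mulVec_mulVec, hMN, zero_mulVec]), zero_mulVec]

lemma PosSemidef.mulVec_eq_zero_of_add {K L : Matrix n n ℂ} (hK : K.PosSemidef)
    (hL : L.PosSemidef) {v : n → ℂ} (hv : (K + L) *ᵥ v = 0) : K *ᵥ v = 0 := by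
  have hsum : star v ⬝ᵥ K *ᵥ v + star v ⬝ᵥ L *ᵥ v = 0 := by
    rw [← dotProduct_add, ← add_mulVec, hv, dotProduct_zero]
  refine (hK.dotProduct_mulVec_zero_iff v).mp ?_
  exact ((add_eq_zero_iff_of_nonneg (hK.dotProduct_mulVec_nonneg v)
    (hL.dotProduct_mulVec_nonneg v)).mp hsum).1

lemma two_mul_re_trace_conjTranspose_mul_le (A B : Matrix n n ℂ) :
    2 * (Aᴴ * B).trace.re ≤ (Aᴴ * A).trace.re + (Bᴴ * B).trace.re := by
  have hnonneg : 0 ≤ ((A - B)ᴴ * (A - B)).trace.re :=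
    Complex.nonneg_iff.mp (posSemidef_conjTranspose_mul_self _).trace_nonneg |>.1
  have hsymm : (Bᴴ * A).trace.re = (Aᴴ * B).trace.re := by
    rw [← conjTranspose_conjTranspose A, ← conjTranspose_mul, trace_conjTranspose,
      conjTranspose_conjTranspose, Complex.star_def, Complex.conj_re]
  simp only [conjTranspose_sub, sub_mul, mul_sub, trace_sub, Complex.sub_re] at hnonneg
  linarith

lemma re_trace_mul_self_le (A : Matrix n n ℂ) : (A * A).trace.re ≤ (Aᴴ * A).trace.re := by
  have h := two_mul_re_trace_conjTranspose_mul_le Aᴴ A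
  rw [conjTranspose_conjTranspose, trace_mul_comm A Aᴴ] at h
  linarith

lemma four_mul_trace_mul_mul_mul_mul {R : Type*} [CommRing R] (K L S : Matrix n n R) :
    4 * (K * S * L * S).trace =
      ((K + L) * S * (K + L) * S).trace - ((K - L) * S * (K - L) * S).trace := by
  have hcyc : (L * S * K * S).trace = (K * S * L * S).trace := by
    rw [mul_assoc (L * S), trace_mul_comm, ← mul_assoc]
  simp only [add_mul, mul_add, sub_mul, mul_sub, trace_add, trace_sub, hcyc]
  ring

end

open scoped MatrixOrder

variable {n : Type*} [Fintype n] [DecidableEq n]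

lemma re_trace_mul_mul_mul_le_of_mul_self_eq_one {U R : Matrix n n ℂ} (hU : U.IsHermitian)
    (hUU : U * U = 1) (hR : R.IsHermitian) :
    (U * R * (U * R)).trace.re ≤ (R * R).trace.re := by
  have h := re_trace_mul_self_le (U * R)
  rwa [conjTranspose_mul, hU.eq, hR.eq, mul_assoc R, ← mul_assoc U, hUU, one_mul] at h

lemma mrpow_eq_cfc {A : Matrix n n ℂ} (hA : A.IsHermitian) (t : ℝ) :
    mrpow A t = cfc (fun x : ℝ => x ^ t) A := by
  rw [mrpow, dif_pos hA, hA.cfc_eq, IsHermitian.cfc, Unitary.conjStarAlgAut_apply]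
  rfl

lemma isHermitian_mrpow (A : Matrix n n ℂ) (t : ℝ) : (mrpow A t).IsHermitian := by
  by_cases hA : A.IsHermitian
  · rw [mrpow_eq_cfc hA]
    exact (cfc_predicate (R := ℝ) _ A).isHermitian
  · rw [mrpow, dif_neg hA]
    exact isHermitian_zero

lemma mrpow_one {A : Matrix n n ℂ} (hA : A.IsHermitian) : mrpow A 1 = A := by
  simp only [mrpow_eq_cfc hA, Real.rpow_one]
  exact cfc_id' ℝ A

lemma mrpow_mul_mrpow {A : Matrix n n ℂ} (hA : A.PosSemidef) {s t : ℝ} (hst : s + t ≠ 0) :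
    mrpow A s * mrpow A t = mrpow A (s + t) := by
  have hfin := A.finite_real_spectrum
  rw [mrpow_eq_cfc hA.1, mrpow_eq_cfc hA.1, mrpow_eq_cfc hA.1,
    ← cfc_mul _ _ _ (hfin.continuousOn _) (hfin.continuousOn _)]
  refine cfc_congr fun x hx => (Real.rpow_add' ?_ hst).symm
  exact spectrum_nonneg_of_nonneg hA.nonneg hx

lemma mul_mrpow_neg_mul_mrpow {M : Matrix n n ℂ} (hM : M.PosSemidef) (t : ℝ) :
    M * mrpow M (-t) * mrpow M t = M := by
  have hfin := M.finite_real_spectrum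
  rw [mrpow_eq_cfc hM.1, mrpow_eq_cfc hM.1]
  nth_rw 1 [← cfc_id' ℝ M]
  rw [← cfc_mul _ _ _ (hfin.continuousOn _) (hfin.continuousOn _),
    ← cfc_mul _ _ _ (hfin.continuousOn _) (hfin.continuousOn _)]
  refine (cfc_congr fun x hx => ?_).trans (cfc_id' ℝ M)
  rcases (spectrum_nonneg_of_nonneg hM.nonneg hx).eq_or_lt with rfl | hx
  · simp
  · rw [Real.rpow_neg hx.le, mul_assoc, inv_mul_cancel₀ (Real.rpow_pos_of_pos hx t).ne', mul_one]

lemma mul_mrpow_neg_half_mul_mul_mrpow_neg_half {M : Matrix n n ℂ} (hM : M.PosSemidef) :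
    M * mrpow M (-(1/2)) * M * mrpow M (-(1/2)) = M := by
  have hhalf : M * mrpow M (-(1/2)) = mrpow M (1/2) := by
    nth_rw 1 [← mrpow_one hM.1]
    rw [mrpow_mul_mrpow hM (by norm_num)]
    norm_num
  rw [mul_assoc (M * _), hhalf, mrpow_mul_mrpow hM (by norm_num)]
  norm_num [mrpow_one hM.1]

lemma exists_isHermitian_mul_self_eq_one_traceNorm_eq {D : Matrix n n ℂ} (hD : D.IsHermitian) :
    ∃ U : Matrix n n ℂ, U.IsHermitian ∧ U * U = 1 ∧ traceNorm D = (U * D).trace.re := by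
  have hfin := D.finite_real_spectrum
  set sign : ℝ → ℝ := fun x => if 0 ≤ x then 1 else -1
  refine ⟨cfc sign D, (cfc_predicate (R := ℝ) _ D).isHermitian, ?_, ?_⟩
  · rw [← cfc_mul _ _ _ (hfin.continuousOn _) (hfin.continuousOn _)]
    refine (cfc_congr fun x _ => ?_).trans (cfc_const_one ℝ D)
    simp only [sign]
    split_ifs <;> norm_num
  · have habs : mrpow (Dᴴ * D) (1/2) = cfc sign D * D := by
      calc mrpow (Dᴴ * D) (1/2)
          = cfc (fun x : ℝ => x ^ (1/2 : ℝ)) (cfc (fun x : ℝ => x * x) D) := by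
            rw [mrpow_eq_cfc (isHermitian_conjTranspose_mul_self D), hD.eq,
              cfc_mul _ _ _ (hfin.continuousOn _) (hfin.continuousOn _), cfc_id' ℝ D]
        _ = cfc (fun x : ℝ => (x * x) ^ (1/2 : ℝ)) D :=
            (cfc_comp' _ _ D ((hfin.image _).continuousOn _) (hfin.continuousOn _)).symm
        _ = cfc (fun x => sign x * x) D := by
            refine cfc_congr fun x _ => ?_
            rw [← Real.sqrt_eq_rpow, Real.sqrt_mul_self_eq_abs]
            simp only [sign]
            split_ifs with hx
            · rw [abs_of_nonneg hx, one_mul]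
            · rw [abs_of_neg (not_le.mp hx), neg_one_mul]
        _ = cfc sign D * D := by
            rw [cfc_mul _ _ _ (hfin.continuousOn _) (hfin.continuousOn _), cfc_id' ℝ D]
    rw [traceNorm, habs]

lemma mrpow_sandwich_eq_self_of_ker_le {M D : Matrix n n ℂ} (hM : M.PosSemidef)
    (hD : D.IsHermitian) (hker : ∀ v, M *ᵥ v = 0 → D *ᵥ v = 0) (t : ℝ) :
    mrpow M t * mrpow M (-t) * D * mrpow M (-t) * mrpow M t = D := by
  have hright : D * mrpow M (-t) * mrpow M t = D := by
    have h := mul_eq_zero_of_ker_le hker (N := 1 - mrpow M (-t) * mrpow M t) (by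
      rw [mul_sub, mul_one, ← mul_assoc, mul_mrpow_neg_mul_mrpow hM, sub_self])
    rw [mul_sub, mul_one, sub_eq_zero] at h
    rw [mul_assoc, ← h]
  have hleft : mrpow M t * mrpow M (-t) * D = D := by
    simpa only [conjTranspose_mul, (isHermitian_mrpow M _).eq, hD.eq, mul_assoc]
      using congrArg conjTranspose hright
  rw [hleft, hright]

lemma two_mul_re_trace_mul_le {M D U : Matrix n n ℂ} (hM : M.PosSemidef) (hD : D.IsHermitian)
    (hker : ∀ v, M *ᵥ v = 0 → D *ᵥ v = 0) (hU : U.IsHermitian) (hUU : U * U = 1) :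
    2 * (U * D).trace.re ≤
      M.trace.re + (D * mrpow M (-(1/2)) * D * mrpow M (-(1/2))).trace.re := by
  set W := mrpow M (1/4)
  set W' := mrpow M (-(1/4))
  set R := mrpow M (1/2)
  set S := mrpow M (-(1/2))
  have hW : Wᴴ = W := isHermitian_mrpow M _
  have hW' : W'ᴴ = W' := isHermitian_mrpow M _
  have hWW : W * W = R := by rw [mrpow_mul_mrpow hM (by norm_num)]; norm_num [R]
  have hW'W' : W' * W' = S := by rw [mrpow_mul_mrpow hM (by norm_num)]; norm_num [S]
  have hRR : R * R = M := by rw [mrpow_mul_mrpow hM (by norm_num)]; norm_num [mrpow_one hM.1]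
  have hsandwich : W * W' * D * W' * W = D := mrpow_sandwich_eq_self_of_ker_le hM hD hker _
  set A := W * U * W
  set B := W' * D * W'
  have hA : Aᴴ = A := by simp only [A, conjTranspose_mul, hW, hU.eq, mul_assoc]
  have hAB : (Aᴴ * B).trace = (U * D).trace := by
    calc (Aᴴ * B).trace = (W * (U * W * W' * D * W')).trace := by
          rw [hA]; simp only [A, B, mul_assoc]
      _ = (U * (W * W' * D * W' * W)).trace := by
          rw [trace_mul_comm]; simp only [mul_assoc]
      _ = (U * D).trace := by rw [hsandwich]
  have hAA : (Aᴴ * A).trace = (U * R * (U * R)).trace := by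
    calc (Aᴴ * A).trace = (W * (U * (W * W) * U * W)).trace := by
          rw [hA]; simp only [A, mul_assoc]
      _ = (U * (W * W) * U * (W * W)).trace := by
          rw [trace_mul_comm]; simp only [mul_assoc]
      _ = (U * R * (U * R)).trace := by rw [hWW, mul_assoc]
  have hBB : (Bᴴ * B).trace = (D * S * D * S).trace := by
    calc (Bᴴ * B).trace = (W' * (D * (W' * W') * D * W')).trace := by
          simp only [B, conjTranspose_mul, hW', hD.eq, mul_assoc]
      _ = (D * (W' * W') * D * (W' * W')).trace := by
          rw [trace_mul_comm]; simp only [mul_assoc]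
      _ = (D * S * D * S).trace := by rw [hW'W']
  have hURUR := re_trace_mul_mul_mul_le_of_mul_self_eq_one hU hUU (isHermitian_mrpow M (1/2))
  rw [hRR] at hURUR
  have h := two_mul_re_trace_conjTranspose_mul_le A B
  rw [hAB, hAA, hBB] at h
  linarith

end Matrix

theorem trace_inequality_via_abs_general {d : ℕ} (K L : Matrix (Fin d) (Fin d) ℂ)
    (hK : K.PosSemidef) (hL : L.PosSemidef) :
    ((K * mrpow (K + L) (-(1/2)) * L * mrpow (K + L) (-(1/2))).trace).re ≤
      (1/2) * (((K + L).trace).re - traceNorm (K - L)) := by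
  have hM : (K + L).PosSemidef := hK.add hL
  have hD : (K - L).IsHermitian := hK.1.sub hL.1
  have hpolar := congrArg Complex.re
    (four_mul_trace_mul_mul_mul_mul K L (mrpow (K + L) (-(1/2))))
  rw [mul_mrpow_neg_half_mul_mul_mrpow_neg_half hM] at hpolar
  have hker : ∀ v, (K + L) *ᵥ v = 0 → (K - L) *ᵥ v = 0 := fun v hv => by
    rw [sub_mulVec, hK.mulVec_eq_zero_of_add hL hv,
      hL.mulVec_eq_zero_of_add hK (by rwa [add_comm]), sub_zero]
  obtain ⟨U, hU, hUU, hnorm⟩ := exists_isHermitian_mul_self_eq_one_traceNorm_eq hD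
  have hbound := two_mul_re_trace_mul_le hM hD hker hU hUU
  simp only [Complex.mul_re, Complex.re_ofNat, Complex.im_ofNat, zero_mul, sub_zero,
    Complex.sub_re] at hpolar
  linarith

/-- For nonzero positive semidefinite operators `K, L` with `M := K + L`,
`Tr[K M^{-1/2} L M^{-1/2}] ≤ (1/2)(Tr[K + L] − Tr|K − L|)`. -/
theorem trace_inequality_via_abs {d : ℕ} (K L : Matrix (Fin d) (Fin d) ℂ)
    (hK : K.PosSemidef) (hL : L.PosSemidef) (hK0 : K ≠ 0) (hL0 : L ≠ 0) :
    ((K * mrpow (K + L) (-(1/2)) * L * mrpow (K + L) (-(1/2))).trace).re ≤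
      (1/2) * (((K + L).trace).re - traceNorm (K - L)) :=
  trace_inequality_via_abs_general K L hK hL

end
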